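/- arXiv:1405.4681 — 6 statements merged into one kernel-verified Lean document; each statement's English description precedes it below -/
import Mathlib

section
/- Let n > m ≥ 1 and consider a weighted directed graph on n vertices with nonnegative adjacency matrix A = (a_ij) ∈ ℝ^{n×n}, whose Laplacian L is defined by L_ii = Σ_{j≠i} a_ij and L_ij = -a_ij for i ≠ j. Suppose the last m vertices are leaders (each of their rows of A is identically zero) and the first n−m vertices are followers, so that L partitions as L = [[L_FF, L_FR],[0, 0]] with L_FF ∈ ℝ^{(n−m)×(n−m)}. Then L_FF is invertible if and only if for every follower i there is a leader j such that i is reachable from j, i.e., (j, i) belongs to the reflexive-transitive closure of the edge relation E(u, v) ⇔ a_vu > 0. -/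
/-!
Write `L = D - A` for the Laplacian and call a vertex *informed* if some leader reaches it.

If every follower is informed and `L_FF x = 0`, extend `x` by zero to the leaders. At a vertex
where `|x|` is maximal the equation `(L x)_v = 0` makes `x_v` a weighted average of its
in-neighbours, so the maximum propagates backwards along every path, in particular back to a
leader, where `x` vanishes; hence `x = 0`.

Conversely, the informed vertices are closed under out-edges, so `L_FF` is block triangular with
respect to informed/uninformed followers, and the uninformed block has zero row sums: if that
block is nonempty, `det L_FF = 0`.
-/

open Finset Matrix Relation

theorem abs_eq_of_sum_mul_eq_sum_mul {R ι : Type*} [CommRing R] [LinearOrder R]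
    [IsStrictOrderedRing R] {s : Finset ι} {w x : ι → R} {c M : R}
    (hw : ∀ i ∈ s, 0 ≤ w i) (hx : ∀ i ∈ s, |x i| ≤ M) (hc : |c| = M)
    (h : ∑ i ∈ s, w i * x i = (∑ i ∈ s, w i) * c) {i : ι} (hi : i ∈ s) (hwi : 0 < w i) :
    |x i| = M := by
  have hle : ∀ i ∈ s, w i * |x i| ≤ w i * M := fun i hi =>
    mul_le_mul_of_nonneg_left (hx i hi) (hw i hi)
  have hge : ∑ i ∈ s, w i * M ≤ ∑ i ∈ s, w i * |x i| :=
    calc ∑ i ∈ s, w i * M = |∑ i ∈ s, w i * x i| := by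
          rw [h, abs_mul, abs_of_nonneg (sum_nonneg hw), hc, sum_mul]
      _ ≤ ∑ i ∈ s, |w i * x i| := abs_sum_le_sum_abs _ _
      _ = ∑ i ∈ s, w i * |x i| := sum_congr rfl fun i hi => by
          rw [abs_mul, abs_of_nonneg (hw i hi)]
  have heq := (sum_eq_sum_iff_of_le hle).1 ((sum_le_sum hle).antisymm hge) i hi
  exact mul_left_cancel₀ hwi.ne' heq

namespace Matrix

variable {R V : Type*} [CommRing R] [Fintype V] [DecidableEq V]

def laplacian (A : Matrix V V R) : Matrix V V R :=
  diagonal (A *ᵥ 1) - A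

variable {A : Matrix V V R}

theorem laplacian_apply_self (i : V) : laplacian A i i = ∑ j ∈ univ.erase i, A i j := by
  simp [laplacian, mulVec, dotProduct, sum_erase_eq_sub (mem_univ i)]

theorem laplacian_apply_of_ne {i j : V} (h : i ≠ j) : laplacian A i j = -A i j := by
  simp [laplacian, diagonal_apply_ne _ h]

theorem laplacian_mulVec_apply (x : V → R) (v : V) :
    (laplacian A *ᵥ x) v = (∑ u, A v u) * x v - ∑ u, A v u * x u := by
  rw [laplacian, sub_mulVec, Pi.sub_apply, mulVec_diagonal]
  simp [mulVec, dotProduct, sum_mul]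

theorem sum_laplacian_apply (v : V) : ∑ u, laplacian A v u = 0 := by
  simpa [mulVec, dotProduct] using laplacian_mulVec_apply (A := A) 1 v

theorem laplacian_apply_eq_zero_of_closed [PartialOrder R] (hA : ∀ i j, 0 ≤ A i j) {P : V → Prop}
    (hP : ∀ u v, 0 < A v u → P u → P v) {u v : V} (hv : ¬P v) (hu : P u) :
    laplacian A v u = 0 := by
  rw [laplacian_apply_of_ne fun h : v = u => hv (h ▸ hu), neg_eq_zero]
  by_contra huv
  exact hv (hP u v ((hA v u).lt_of_ne' huv) hu)

section Ordered

variable [LinearOrder R] [IsStrictOrderedRing R]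

theorem abs_eq_of_laplacian_mulVec_eq_zero (hA : ∀ i j, 0 ≤ A i j) {x : V → R} {M : R}
    (hM : ∀ v, |x v| ≤ M) {u v : V} (hv : |x v| = M) (hLx : (laplacian A *ᵥ x) v = 0)
    (huv : 0 < A v u) : |x u| = M := by
  rw [laplacian_mulVec_apply, sub_eq_zero] at hLx
  exact abs_eq_of_sum_mul_eq_sum_mul (fun u _ => hA v u) (fun u _ => hM u) hv hLx.symm
    (mem_univ u) huv

theorem abs_eq_of_reflTransGen (hA : ∀ i j, 0 ≤ A i j) {x : V → R} {M : R}
    (hM : ∀ v, |x v| ≤ M) (hLx : ∀ v, |x v| = M → (laplacian A *ᵥ x) v = 0) {u v : V}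
    (huv : ReflTransGen (fun u v => 0 < A v u) u v) (hv : |x v| = M) : |x u| = M := by
  induction huv using ReflTransGen.head_induction_on with
  | refl => exact hv
  | head hab _ ih => exact abs_eq_of_laplacian_mulVec_eq_zero hA hM ih (hLx _ ih) hab

section FollowerLeader

variable {α β : Type*} [Fintype α] [Fintype β] [DecidableEq α] [DecidableEq β]
  {A : Matrix (α ⊕ β) (α ⊕ β) R}

theorem det_laplacian_submatrix_inl_ne_zero (hA : ∀ i j, 0 ≤ A i j)
    (hreach : ∀ i, ∃ j, ReflTransGen (fun u v => 0 < A v u) (Sum.inr j) (Sum.inl i)) :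
    ((laplacian A).submatrix Sum.inl Sum.inl).det ≠ 0 := by
  rw [Ne, ← exists_mulVec_eq_zero_iff]
  rintro ⟨x, hx0, hx⟩
  obtain ⟨k, hk⟩ := Function.ne_iff.1 hx0
  have : Nonempty α := ⟨k⟩
  obtain ⟨i₀, hi₀⟩ := Finite.exists_max fun i => |x i|
  have hMpos : 0 < |x i₀| := (abs_pos.2 hk).trans_le (hi₀ k)
  set X : α ⊕ β → R := Sum.elim x 0
  have hM : ∀ v, |X v| ≤ |x i₀| := by
    rintro (i | j)
    exacts [hi₀ i, by simp [X]]
  have hLX : ∀ v, |X v| = |x i₀| → (laplacian A *ᵥ X) v = 0 := by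
    rintro (i | j) hv
    · simpa [X, mulVec, dotProduct, Fintype.sum_sum_type] using congrFun hx i
    · exact absurd (by simpa [X] using hv) hMpos.ne
  obtain ⟨j, hj⟩ := hreach i₀
  exact hMpos.ne (by simpa [X] using abs_eq_of_reflTransGen hA hM hLX hj rfl)

theorem det_laplacian_submatrix_inl_eq_zero (hA : ∀ i j, 0 ≤ A i j) {i₀ : α}
    (hi₀ : ∀ j, ¬ReflTransGen (fun u v => 0 < A v u) (Sum.inr j) (Sum.inl i₀)) :
    ((laplacian A).submatrix Sum.inl Sum.inl).det = 0 := by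
  classical
  set Informed : α ⊕ β → Prop := fun v => ∃ j, ReflTransGen (fun u v => 0 < A v u) (Sum.inr j) v
  have hvanish {u v} : ¬Informed v → Informed u → laplacian A v u = 0 :=
    laplacian_apply_eq_zero_of_closed hA fun _ _ huv ⟨j, hj⟩ => ⟨j, hj.tail huv⟩
  set LFF := (laplacian A).submatrix Sum.inl Sum.inl
  rw [twoBlockTriangular_det LFF (fun i => Informed (Sum.inl i)) fun i hi j hj => hvanish hi hj]
  suffices (toSquareBlockProp LFF fun i => ¬Informed (Sum.inl i)).det = 0 by
    rw [this, mul_zero]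
  rw [← exists_mulVec_eq_zero_iff]
  have : Nonempty {i // ¬Informed (Sum.inl i)} := ⟨⟨i₀, by simpa [Informed] using hi₀⟩⟩
  refine ⟨1, one_ne_zero, funext fun i => ?_⟩
  have hinformed : ∀ v ∉ Set.range fun i : {i // ¬Informed (Sum.inl i)} => Sum.inl i.1,
      Informed v := by
    rintro (j | j) hj
    · by_contra h
      exact hj ⟨⟨j, h⟩, rfl⟩
    · exact ⟨j, .refl⟩
  calc _ = ∑ j : {j // ¬Informed (Sum.inl j)}, laplacian A (Sum.inl i) (Sum.inl j) := by
        simp [LFF, mulVec, dotProduct, toSquareBlockProp, toBlock]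
    _ = ∑ v, laplacian A (Sum.inl i) v :=
        Fintype.sum_of_injective _ (Sum.inl_injective.comp Subtype.val_injective) _ _
          (fun v hv => hvanish i.2 (hinformed v hv)) fun _ => rfl
    _ = 0 := sum_laplacian_apply _

theorem det_laplacian_submatrix_inl_ne_zero_iff (hA : ∀ i j, 0 ≤ A i j) :
    ((laplacian A).submatrix Sum.inl Sum.inl).det ≠ 0 ↔
      ∀ i, ∃ j, ReflTransGen (fun u v => 0 < A v u) (Sum.inr j) (Sum.inl i) := by
  refine ⟨fun hdet i => ?_, det_laplacian_submatrix_inl_ne_zero hA⟩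
  by_contra! h
  exact hdet (det_laplacian_submatrix_inl_eq_zero hA h)

end FollowerLeader

end Ordered

end Matrix

theorem laplacian_follower_block_invertible_iff_reachable_general
    (p m : ℕ)
    (A : Matrix (Fin p ⊕ Fin m) (Fin p ⊕ Fin m) ℝ)
    (hA : ∀ i j, 0 ≤ A i j)
    (L : Matrix (Fin p ⊕ Fin m) (Fin p ⊕ Fin m) ℝ)
    (hLdiag : ∀ i, L i i = ∑ j ∈ Finset.univ.filter (fun j => j ≠ i), A i j)
    (hLoff : ∀ i j, i ≠ j → L i j = -A i j)
    (LFF : Matrix (Fin p) (Fin p) ℝ)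
    (hLFF : ∀ i j, LFF i j = L (Sum.inl i) (Sum.inl j)) :
    IsUnit LFF ↔
      ∀ i : Fin p, ∃ j : Fin m,
        Relation.ReflTransGen (fun u v => 0 < A v u) (Sum.inr j) (Sum.inl i) := by
  have hL : L = laplacian A := by
    ext i j
    obtain rfl | hij := eq_or_ne i j
    · rw [hLdiag, laplacian_apply_self, filter_ne']
    · rw [hLoff i j hij, laplacian_apply_of_ne hij]
  have hLFF' : LFF = (laplacian A).submatrix Sum.inl Sum.inl := by
    ext i j
    rw [hLFF, hL, submatrix_apply]
  rw [hLFF', isUnit_iff_isUnit_det, isUnit_iff_ne_zero]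
  exact det_laplacian_submatrix_inl_ne_zero_iff hA

/-- **Lemma 1 (Liu et al. 2012).** For a weighted directed graph whose vertex set splits into
`p = n - m ≥ 1` followers (indexed by `Fin p`, listed first) and `m ≥ 1` leaders
(indexed by `Fin m`, listed last), with nonnegative adjacency matrix `A`
(leaders' rows of `A` identically zero, followers having at least one neighbor),
the follower–follower block `LFF` of the Laplacian `L` is invertible if and only if
every follower is reachable from some leader, where there is a directed edge from `u`
to `v` iff `A v u > 0`. -/
theorem laplacian_follower_block_invertible_iff_reachable
    (p m : ℕ) (hp : 1 ≤ p) (hm : 1 ≤ m)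
    (A : Matrix (Fin p ⊕ Fin m) (Fin p ⊕ Fin m) ℝ)
    (hA : ∀ i j, 0 ≤ A i j)
    (hleader : ∀ (j : Fin m) (v : Fin p ⊕ Fin m), A (Sum.inr j) v = 0)
    (hfollower : ∀ i : Fin p, ∃ v, 0 < A (Sum.inl i) v)
    (L : Matrix (Fin p ⊕ Fin m) (Fin p ⊕ Fin m) ℝ)
    (hLdiag : ∀ i, L i i = ∑ j ∈ Finset.univ.filter (fun j => j ≠ i), A i j)
    (hLoff : ∀ i j, i ≠ j → L i j = -A i j)
    (LFF : Matrix (Fin p) (Fin p) ℝ)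
    (hLFF : ∀ i j, LFF i j = L (Sum.inl i) (Sum.inl j)) :
    IsUnit LFF ↔
      ∀ i : Fin p, ∃ j : Fin m,
        Relation.ReflTransGen (fun u v => 0 < A v u) (Sum.inr j) (Sum.inl i) :=
  laplacian_follower_block_invertible_iff_reachable_general p m A hA L hLdiag hLoff LFF hLFF
end

section
/- Let n > m ≥ 1 and consider a weighted directed graph on n vertices with nonnegative adjacency matrix A = (a_ij) and Laplacian L partitioned as L = [[L_FF, L_FR],[0, 0]] with the last m vertices being leaders and the first n−m being followers. If for every follower i there is a leader j from which i is reachable, then every complex eigenvalue of L_FF has strictly positive real part (equivalently, −L_FF is Hurwitz). -/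
/-!
Write `L_FF = diagonal d - N`, where `N ≥ 0` holds the follower–follower weights and `d i` is the
total weight of the neighbours of `i`, so `∑ j, N i j ≤ d i`. Suppose
`L_FF x = μ x` with `Re μ ≤ 0`. At a follower `i` where `|x i|` is maximal,
`d i |x i| ≤ |d i - μ| |x i| = |∑ N i j x j| ≤ ∑ N i j |x j| ≤ d i |x i|`, so every inequality is
an equality: `i` has no leader neighbour and all its neighbours are followers where `|x|` is
maximal. Walking backwards along a path from a leader to such a follower therefore ends at a
leader where `|x|` is maximal, which is absurd.
-/

open Matrix Finset

section DiagonallyDominant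

variable {ι : Type*} [Fintype ι] [DecidableEq ι]

theorem Matrix.exists_mulVec_eq_smul_of_mem_spectrum {K : Type*} [Field K] {B : Matrix ι ι K}
    {μ : K} (hμ : μ ∈ spectrum K B) : ∃ x ≠ 0, B *ᵥ x = μ • x := by
  rw [← Matrix.spectrum_toLin', ← Module.End.hasEigenvalue_iff_mem_spectrum] at hμ
  obtain ⟨x, hx⟩ := hμ.exists_hasEigenvector
  exact ⟨x, hx.2, by simpa using hx.apply_eq_smul⟩

theorem mulVec_map_diagonal_sub_apply (d : ι → ℝ) (N : Matrix ι ι ℝ) (x : ι → ℂ) (i : ι) :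
    ((diagonal d - N).map Complex.ofReal *ᵥ x) i = d i * x i - ∑ j, N i j * x j := by
  simp [mulVec, dotProduct, sub_mul, sum_sub_distrib, diagonal_apply, apply_ite Complex.ofReal,
    ite_mul]

variable {d : ι → ℝ} {N : Matrix ι ι ℝ} {x : ι → ℂ} {μ : ℂ}

theorem norm_sub_mul_norm_le_of_mulVec_eq_smul (hN : ∀ i j, 0 ≤ N i j)
    (hx : (diagonal d - N).map Complex.ofReal *ᵥ x = μ • x) (i : ι) :
    ‖(d i : ℂ) - μ‖ * ‖x i‖ ≤ ∑ j, N i j * ‖x j‖ := by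
  have hrow : ((d i : ℂ) - μ) * x i = ∑ j, (N i j : ℂ) * x j := by
    have := congrFun hx i
    rw [mulVec_map_diagonal_sub_apply, Pi.smul_apply, smul_eq_mul] at this
    linear_combination this
  calc ‖(d i : ℂ) - μ‖ * ‖x i‖ = ‖∑ j, (N i j : ℂ) * x j‖ := by rw [← norm_mul, hrow]
    _ ≤ ∑ j, ‖(N i j : ℂ) * x j‖ := norm_sum_le _ _
    _ = ∑ j, N i j * ‖x j‖ := by simp [abs_of_nonneg (hN i _)]

theorem sum_eq_and_norm_eq_of_forall_norm_le (hN : ∀ i j, 0 ≤ N i j) {i : ι}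
    (hd : ∑ j, N i j ≤ d i) (hx : (diagonal d - N).map Complex.ofReal *ᵥ x = μ • x)
    (hμ : μ.re ≤ 0) (hmax : ∀ j, ‖x j‖ ≤ ‖x i‖) (hxi : x i ≠ 0) :
    ∑ j, N i j = d i ∧ ∀ j, 0 < N i j → ‖x j‖ = ‖x i‖ := by
  set M := ‖x i‖
  have hM : 0 < M := norm_pos_iff.2 hxi
  have hdμ : d i ≤ ‖(d i : ℂ) - μ‖ :=
    calc d i ≤ ((d i : ℂ) - μ).re := by rw [Complex.sub_re, Complex.ofReal_re]; linarith
      _ ≤ ‖(d i : ℂ) - μ‖ := Complex.re_le_norm _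
  have hchain : d i * M ≤ ∑ j, N i j * ‖x j‖ :=
    (mul_le_mul_of_nonneg_right hdμ hM.le).trans (norm_sub_mul_norm_le_of_mulVec_eq_smul hN hx i)
  have hslack : ∑ j, N i j * (M - ‖x j‖) = (∑ j, N i j) * M - ∑ j, N i j * ‖x j‖ := by
    simp only [mul_sub, sum_sub_distrib, sum_mul]
  have hsum_nonneg : 0 ≤ ∑ j, N i j * (M - ‖x j‖) :=
    sum_nonneg fun j _ => mul_nonneg (hN i j) (sub_nonneg.2 (hmax j))
  constructor
  · nlinarith
  · intro j hj
    have hterm := (sum_eq_zero_iff_of_nonneg fun j _ => mul_nonneg (hN i j)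
      (sub_nonneg.2 (hmax j))).1 (by nlinarith) j (mem_univ j)
    linarith [(mul_eq_zero.1 hterm).resolve_left hj.ne']

end DiagonallyDominant

section LeaderFollower

variable {ι κ : Type*} [Fintype ι] [Fintype κ] [DecidableEq ι]

def followerLaplacian (A : Matrix (ι ⊕ κ) (ι ⊕ κ) ℝ) : Matrix ι ι ℝ :=
  diagonal (fun i => ∑ v, A (Sum.inl i) v) - A.toBlocks₁₁

theorem eq_followerLaplacian [DecidableEq κ] {A L : Matrix (ι ⊕ κ) (ι ⊕ κ) ℝ}
    {LFF : Matrix ι ι ℝ} (hLdiag : ∀ i, L i i = ∑ j ∈ univ.filter (fun j => j ≠ i), A i j)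
    (hLoff : ∀ i j, i ≠ j → L i j = -A i j) (hLFF : ∀ i j, LFF i j = L (Sum.inl i) (Sum.inl j)) :
    LFF = followerLaplacian A := by
  ext i j
  rw [hLFF, followerLaplacian, Matrix.sub_apply]
  obtain rfl | hij := eq_or_ne i j
  · rw [hLdiag, filter_ne', sum_erase_eq_sub (mem_univ _), diagonal_apply_eq]
    rfl
  · rw [hLoff _ _ (Sum.inl_injective.ne hij), diagonal_apply_ne _ hij, zero_sub]
    rfl

theorem exists_eq_inl_norm_eq_of_followerLaplacian {A : Matrix (ι ⊕ κ) (ι ⊕ κ) ℝ}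
    (hA : ∀ u v, 0 ≤ A u v) {x : ι → ℂ} {μ : ℂ}
    (hx : (followerLaplacian A).map Complex.ofReal *ᵥ x = μ • x) (hμ : μ.re ≤ 0) {i : ι}
    (hmax : ∀ j, ‖x j‖ ≤ ‖x i‖) (hxi : x i ≠ 0) {u : ι ⊕ κ} (hu : 0 < A (Sum.inl i) u) :
    ∃ j, u = Sum.inl j ∧ ‖x j‖ = ‖x i‖ := by
  have hdeg : ∑ v, A (Sum.inl i) v =
      ∑ j, A (Sum.inl i) (Sum.inl j) + ∑ l, A (Sum.inl i) (Sum.inr l) :=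
    Fintype.sum_sum_type _
  have hleader : 0 ≤ ∑ l, A (Sum.inl i) (Sum.inr l) := sum_nonneg fun _ _ => hA _ _
  obtain ⟨hsum, hnorm⟩ := sum_eq_and_norm_eq_of_forall_norm_le (fun _ _ => hA _ _)
    (by rw [hdeg]; linarith) hx hμ hmax hxi
  rcases u with j | l
  · exact ⟨j, rfl, hnorm j hu⟩
  · have hsum' : ∑ j, A (Sum.inl i) (Sum.inl j) = ∑ v, A (Sum.inl i) v := hsum
    have hzero := (sum_eq_zero_iff_of_nonneg fun l _ => hA (Sum.inl i) (Sum.inr l)).1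
      (by linarith) l (mem_univ l)
    exact absurd hzero hu.ne'

theorem followerLaplacian_re_pos_of_reachable (A : Matrix (ι ⊕ κ) (ι ⊕ κ) ℝ)
    (hA : ∀ u v, 0 ≤ A u v)
    (hreach : ∀ i, ∃ l, Relation.ReflTransGen (fun u v => 0 < A v u) (Sum.inr l) (Sum.inl i))
    {μ : ℂ} (hμ : μ ∈ spectrum ℂ ((followerLaplacian A).map Complex.ofReal)) : 0 < μ.re := by
  by_contra! hre
  obtain ⟨x, hx0, hx⟩ := exists_mulVec_eq_smul_of_mem_spectrum hμ
  obtain ⟨i, hi⟩ : ∃ i, x i ≠ 0 := Function.ne_iff.1 hx0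
  have : Nonempty ι := ⟨i⟩
  obtain ⟨i₀, hi₀⟩ := Finite.exists_max (‖x ·‖)
  have hxi₀ : 0 < ‖x i₀‖ := (norm_pos_iff.2 hi).trans_le (hi₀ i)
  let IsMaxFollower (v : ι ⊕ κ) : Prop := ∃ j, v = Sum.inl j ∧ ‖x j‖ = ‖x i₀‖
  have hclosed : ∀ u v, 0 < A v u → IsMaxFollower v → IsMaxFollower u := by
    rintro u _ hu ⟨i, rfl, hi⟩
    obtain ⟨j, rfl, hj⟩ := exists_eq_inl_norm_eq_of_followerLaplacian hA hx hre
      (fun j => hi ▸ hi₀ j) (norm_pos_iff.1 (hi ▸ hxi₀)) hu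
    exact ⟨j, rfl, hj.trans hi⟩
  obtain ⟨l, hl⟩ := hreach i₀
  obtain ⟨j, hj, -⟩ : IsMaxFollower (Sum.inr l) :=
    hl.head_induction_on (motive := fun v _ => IsMaxFollower v) ⟨i₀, rfl, rfl⟩
      fun huv _ ih => hclosed _ _ huv ih
  exact Sum.inr_ne_inl hj

end LeaderFollower

theorem laplacian_follower_block_eigenvalues_pos_re_general
    (p m : ℕ)
    (A : Matrix (Fin p ⊕ Fin m) (Fin p ⊕ Fin m) ℝ)
    (hA : ∀ i j, 0 ≤ A i j)
    (L : Matrix (Fin p ⊕ Fin m) (Fin p ⊕ Fin m) ℝ)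
    (hLdiag : ∀ i, L i i = ∑ j ∈ Finset.univ.filter (fun j => j ≠ i), A i j)
    (hLoff : ∀ i j, i ≠ j → L i j = -A i j)
    (LFF : Matrix (Fin p) (Fin p) ℝ)
    (hLFF : ∀ i j, LFF i j = L (Sum.inl i) (Sum.inl j))
    (hreach : ∀ i : Fin p, ∃ j : Fin m,
        Relation.ReflTransGen (fun u v => 0 < A v u) (Sum.inr j) (Sum.inl i)) :
    ∀ μ ∈ spectrum ℂ (LFF.map (Complex.ofReal ·)), 0 < μ.re := by
  rw [eq_followerLaplacian hLdiag hLoff hLFF]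
  exact fun μ hμ => followerLaplacian_re_pos_of_reachable A hA hreach hμ

/-- If every follower is reachable from some leader, then every complex eigenvalue of the
follower–follower block `LFF` of the Laplacian has strictly positive real part
(equivalently, `-LFF` is Hurwitz). Followers are indexed by `Fin p` (listed first),
leaders by `Fin m` (listed last); there is a directed edge from `u` to `v` iff `A v u > 0`. -/
theorem laplacian_follower_block_eigenvalues_pos_re
    (p m : ℕ) (hp : 1 ≤ p) (hm : 1 ≤ m)
    (A : Matrix (Fin p ⊕ Fin m) (Fin p ⊕ Fin m) ℝ)
    (hA : ∀ i j, 0 ≤ A i j)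
    (hleader : ∀ (j : Fin m) (v : Fin p ⊕ Fin m), A (Sum.inr j) v = 0)
    (hfollower : ∀ i : Fin p, ∃ v, 0 < A (Sum.inl i) v)
    (L : Matrix (Fin p ⊕ Fin m) (Fin p ⊕ Fin m) ℝ)
    (hLdiag : ∀ i, L i i = ∑ j ∈ Finset.univ.filter (fun j => j ≠ i), A i j)
    (hLoff : ∀ i j, i ≠ j → L i j = -A i j)
    (LFF : Matrix (Fin p) (Fin p) ℝ)
    (hLFF : ∀ i j, LFF i j = L (Sum.inl i) (Sum.inl j))
    (hreach : ∀ i : Fin p, ∃ j : Fin m,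
        Relation.ReflTransGen (fun u v => 0 < A v u) (Sum.inr j) (Sum.inl i)) :
    ∀ μ ∈ spectrum ℂ (LFF.map (Complex.ofReal ·)), 0 < μ.re :=
  laplacian_follower_block_eigenvalues_pos_re_general p m A hA L hLdiag hLoff LFF hLFF hreach
end

section
/- Let M ∈ ℝ^{d×d} be a real matrix all of whose complex eigenvalues have strictly positive real part. Then there exists a symmetric positive definite matrix P ∈ ℝ^{d×d} such that P·M + Mᵀ·P = I_d. -/
/-!
Along the segment `N s = (1 - s) • M + s • 1`, `0 ≤ s ≤ 1`, every `N s` is positive stable,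
so by Sylvester's theorem `X ↦ X * N s + (N s)ᵀ * X` is invertible and the solution `P s` of
`P s * N s + (N s)ᵀ * P s = 1` depends continuously on `s`. Each `P s` is symmetric (by
uniqueness) and nonsingular: if `P s v = 0` then
`v ⬝ᵥ v = v ⬝ᵥ (P s * N s + (N s)ᵀ * P s) v = 0`.
Since `P 1 = 2⁻¹ • 1` is positive definite and an eigenvalue of `P s` can never cross `0`,
`P 0` is positive definite as well.
-/

open Polynomial
open scoped Kronecker

namespace Matrix

section Spectrum

variable {K n : Type*} [Field K] [Fintype n] [DecidableEq n]

theorem spectrum_transpose (A : Matrix n n K) : spectrum K Aᵀ = spectrum K A := by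
  ext μ
  simp only [mem_spectrum_iff_isRoot_charpoly, charpoly_transpose]

theorem spectrum_aeval [IsAlgClosed K] (A : Matrix n n K) (p : K[X]) :
    spectrum K (aeval A p) = (eval · p) '' spectrum K A := by
  cases isEmpty_or_nonempty n
  · simp [spectrum.of_subsingleton]
  · exact spectrum.map_polynomial_aeval_of_nonempty A p
      (spectrum.nonempty_of_isAlgClosed_of_finiteDimensional K A)

end Spectrum

section Sylvester

variable {K m n : Type*} [Field K] [Fintype m] [DecidableEq m] [Fintype n] [DecidableEq n]

theorem aeval_mul_eq_mul_aeval {A : Matrix m m K} {B : Matrix n n K} {X : Matrix m n K}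
    (h : A * X = X * B) (p : K[X]) : aeval A p * X = X * aeval B p := by
  have hpow (k : ℕ) : A ^ k * X = X * B ^ k := by
    induction k with
    | zero => simp
    | succ k ih => rw [pow_succ, Matrix.mul_assoc, h, ← Matrix.mul_assoc, ih, Matrix.mul_assoc,
        ← pow_succ]
  induction p using Polynomial.induction_on' with
  | add p q hp hq => simp only [map_add, Matrix.add_mul, Matrix.mul_add, hp, hq]
  | monomial k c =>
    rw [aeval_monomial, aeval_monomial, ← Algebra.smul_def, ← Algebra.smul_def, Matrix.smul_mul,
      Matrix.mul_smul, hpow]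

/-- Sylvester's theorem: `p(A) = 0` for the characteristic polynomial `p` of `A`, while `p(B)` is
invertible because `p` has no root in the spectrum of `B`. -/
theorem eq_zero_of_mul_eq_mul_of_disjoint_spectrum [IsAlgClosed K] {A : Matrix m m K}
    {B : Matrix n n K} (hAB : Disjoint (spectrum K A) (spectrum K B)) {X : Matrix m n K}
    (h : A * X = X * B) : X = 0 := by
  have hunit : IsUnit (aeval B A.charpoly) := by
    rw [← spectrum.zero_notMem_iff K, spectrum_aeval]
    rintro ⟨μ, hμB, hμ⟩
    exact hAB.ne_of_mem (mem_spectrum_iff_isRoot_charpoly.mpr hμ) hμB rfl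
  have hX : X * aeval B A.charpoly = 0 := by
    rw [← aeval_mul_eq_mul_aeval h, aeval_self_charpoly, Matrix.zero_mul]
  rw [← Matrix.mul_one X, ← Matrix.mul_nonsing_inv _ ((isUnit_iff_isUnit_det _).mp hunit),
    ← Matrix.mul_assoc, hX, Matrix.zero_mul]

end Sylvester

section LyapunovMatrix

variable {n R : Type*} [DecidableEq n] [CommRing R]

def lyapunovMatrix (N : Matrix n n R) : Matrix (n × n) (n × n) R := Nᵀ ⊗ₖ 1 + 1 ⊗ₖ Nᵀ

theorem continuous_lyapunovMatrix [TopologicalSpace R] [IsTopologicalRing R] :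
    Continuous (lyapunovMatrix : Matrix n n R → _) := by
  refine continuous_matrix fun i j => ?_
  simp only [lyapunovMatrix, add_apply, kroneckerMap_apply, transpose_apply]
  fun_prop

variable [Fintype n]

theorem lyapunovMatrix_mulVec_vec (N X : Matrix n n R) :
    lyapunovMatrix N *ᵥ vec X = vec (X * N + Nᵀ * X) := by
  rw [lyapunovMatrix, add_mulVec, kronecker_mulVec_vec, kronecker_mulVec_vec, vec_add,
    Matrix.one_mul, transpose_transpose, transpose_one, Matrix.mul_one]

/-- `vec⁻¹ ((lyapunovMatrix N)⁻¹ *ᵥ vec 1)`,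
junk unless `lyapunovMatrix N` is invertible. -/
noncomputable def lyapunovSolution (N : Matrix n n R) : Matrix n n R :=
  of fun i j => ((lyapunovMatrix N)⁻¹ *ᵥ vec 1) (j, i)

theorem vec_lyapunovSolution (N : Matrix n n R) :
    vec (lyapunovSolution N) = (lyapunovMatrix N)⁻¹ *ᵥ vec 1 :=
  rfl

theorem lyapunovSolution_mul_add_transpose_mul {N : Matrix n n R}
    (hN : IsUnit (lyapunovMatrix N).det) :
    lyapunovSolution N * N + Nᵀ * lyapunovSolution N = 1 := by
  rw [← vec_inj, ← lyapunovMatrix_mulVec_vec, vec_lyapunovSolution, mulVec_mulVec,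
    mul_nonsing_inv _ hN, one_mulVec]

theorem continuousAt_lyapunovSolution {N : Matrix n n ℝ} (hN : IsUnit (lyapunovMatrix N).det) :
    ContinuousAt lyapunovSolution N := by
  have hdet : ContinuousAt Ring.inverse (lyapunovMatrix N).det := by
    simpa only [Ring.inverse_eq_inv'] using continuousAt_inv₀ hN.ne_zero
  have hinv : ContinuousAt (fun N : Matrix n n ℝ => (lyapunovMatrix N)⁻¹) N :=
    (continuousAt_matrix_inv _ hdet).comp continuous_lyapunovMatrix.continuousAt
  have hof : Continuous fun w : n × n → ℝ => of fun i j => w (j, i) :=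
    continuous_matrix fun i j => continuous_apply (j, i)
  exact hof.continuousAt.comp
    ((continuous_id.matrix_mulVec continuous_const).continuousAt.comp hinv)

end LyapunovMatrix

section PositiveStable

variable {n : Type*} [Fintype n] [DecidableEq n]

def IsPositiveStable (N : Matrix n n ℝ) : Prop :=
  ∀ μ ∈ spectrum ℂ (N.map (Complex.ofReal ·)), 0 < μ.re

theorem IsPositiveStable.smul_add_smul_one {N : Matrix n n ℝ} (hN : N.IsPositiveStable) {s : ℝ}
    (hs₀ : 0 ≤ s) (hs₁ : s ≤ 1) : ((1 - s) • N + s • 1).IsPositiveStable := by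
  have hmap : ((1 - s) • N + s • 1).map (Complex.ofReal ·) =
      aeval (N.map (Complex.ofReal ·)) (C ((1 - s : ℝ) : ℂ) * X + C (s : ℂ)) := by
    rw [aeval_add, aeval_mul, aeval_C, aeval_C, aeval_X, ← Algebra.smul_def]
    ext i j
    rcases eq_or_ne i j with rfl | h <;> simp [*, algebraMap_matrix_apply]
  intro μ hμ
  rw [hmap, spectrum_aeval] at hμ
  obtain ⟨ν, hν, rfl⟩ := hμ
  have hν₀ := hN ν hν
  have : 0 ≤ (1 - s) * ν.re := mul_nonneg (by linarith) hν₀.le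
  simp only [eval_add, eval_mul, eval_C, eval_X, Complex.add_re, Complex.mul_re,
    Complex.ofReal_re, Complex.ofReal_im, zero_mul, sub_zero]
  rcases hs₀.eq_or_lt with rfl | hs
  · simpa using hν₀
  · linarith

/-- The spectra of `Nᵀ` and `-N` lie in opposite open half-planes. -/
theorem IsPositiveStable.eq_zero_of_mul_add_transpose_mul_eq_zero {N X : Matrix n n ℝ}
    (hN : N.IsPositiveStable) (hX : X * N + Nᵀ * X = 0) : X = 0 := by
  set f := Complex.ofRealHom
  have hc : (N.map f)ᵀ * X.map f = X.map f * (-N.map f) := by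
    have := congrArg f.mapMatrix hX
    simp only [map_add, map_mul, map_zero, RingHom.mapMatrix_apply, transpose_map] at this
    rw [Matrix.mul_neg, eq_neg_iff_add_eq_zero, add_comm, this]
  have hdisj : Disjoint (spectrum ℂ (N.map f)ᵀ) (spectrum ℂ (-N.map f)) := by
    rw [spectrum_transpose, ← spectrum.neg_eq, Set.disjoint_left]
    intro μ hμ hμneg
    have := hN _ hμneg
    have := hN μ hμ
    simp only [Complex.neg_re] at *
    linarith
  have := eq_zero_of_mul_eq_mul_of_disjoint_spectrum hdisj hc
  ext i j
  simpa using congrFun₂ this i j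

theorem IsPositiveStable.isUnit_det_lyapunovMatrix {N : Matrix n n ℝ}
    (hN : N.IsPositiveStable) : IsUnit (lyapunovMatrix N).det := by
  rw [← isUnit_iff_isUnit_det, ← mulVec_injective_iff_isUnit]
  intro v w h
  obtain ⟨X, rfl⟩ := vec_bijective.surjective v
  obtain ⟨Y, rfl⟩ := vec_bijective.surjective w
  rw [lyapunovMatrix_mulVec_vec, lyapunovMatrix_mulVec_vec, vec_inj] at h
  rw [vec_inj, ← sub_eq_zero]
  refine hN.eq_zero_of_mul_add_transpose_mul_eq_zero ?_
  rw [Matrix.sub_mul, Matrix.mul_sub, sub_add_sub_comm, h, sub_self]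

theorem IsPositiveStable.isSymm_of_mul_add_transpose_mul_eq {N P Q : Matrix n n ℝ}
    (hN : N.IsPositiveStable) (hQ : Q.IsSymm) (hP : P * N + Nᵀ * P = Q) : P.IsSymm := by
  have hPt : Pᵀ * N + Nᵀ * Pᵀ = Q := by
    rw [← hQ.eq, ← hP, transpose_add, transpose_mul, transpose_mul, transpose_transpose,
      add_comm]
  have := hN.eq_zero_of_mul_add_transpose_mul_eq_zero (X := Pᵀ - P)
    (by rw [Matrix.sub_mul, Matrix.mul_sub, sub_add_sub_comm, hPt, hP, sub_self])
  exact sub_eq_zero.mp this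

end PositiveStable

theorem isUnit_of_mul_add_transpose_mul_eq_one {n : Type*} [Fintype n] [DecidableEq n]
    {N P : Matrix n n ℝ} (hP : P.IsSymm) (h : P * N + Nᵀ * P = 1) : IsUnit P := by
  rw [← mulVec_injective_iff_isUnit]
  refine (injective_iff_map_eq_zero P.mulVecLin).mpr fun v hv => ?_
  rw [mulVecLin_apply] at hv
  have hPN : v ⬝ᵥ (P *ᵥ (N *ᵥ v)) = 0 := by
    rw [dotProduct_mulVec, ← mulVec_transpose, hP.eq, hv, zero_dotProduct]
  have hNP : v ⬝ᵥ (Nᵀ *ᵥ (P *ᵥ v)) = 0 := by rw [hv, mulVec_zero, dotProduct_zero]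
  refine dotProduct_self_eq_zero.mp ?_
  calc v ⬝ᵥ v = v ⬝ᵥ ((P * N + Nᵀ * P) *ᵥ v) := by rw [h, one_mulVec]
    _ = 0 := by rw [add_mulVec, dotProduct_add, ← mulVec_mulVec, ← mulVec_mulVec, hPN, hNP,
      add_zero]

section Topology

variable {n X : Type*} [Fintype n] [TopologicalSpace X]

theorem IsHermitian.posDef_iff_forall_mem_sphere {A : Matrix n n ℝ} (hA : A.IsHermitian) :
    A.PosDef ↔ ∀ v ∈ Metric.sphere (0 : n → ℝ) 1, 0 < v ⬝ᵥ (A *ᵥ v) := by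
  simp only [posDef_iff_dotProduct_mulVec, hA, star_trivial, true_and, mem_sphere_zero_iff_norm]
  refine ⟨fun h v hv => h (norm_ne_zero_iff.mp (by simp [hv])), fun h v hv => ?_⟩
  have hv' : 0 < ‖v‖ := norm_pos_iff.mpr hv
  have := h (‖v‖⁻¹ • v) (by rw [norm_smul, norm_inv, norm_norm, inv_mul_cancel₀ hv'.ne'])
  rw [mulVec_smul, dotProduct_smul, smul_dotProduct, smul_eq_mul, smul_eq_mul] at this
  exact pos_of_mul_pos_right (pos_of_mul_pos_right this (by positivity)) (by positivity)

theorem isOpen_setOf_posDef {P : X → Matrix n n ℝ} (hP : Continuous P)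
    (hherm : ∀ x, (P x).IsHermitian) : IsOpen {x | (P x).PosDef} := by
  simp only [fun x => (hherm x).posDef_iff_forall_mem_sphere]
  refine isOpen_iff_mem_nhds.mpr fun x₀ h₀ => ?_
  have hf : Continuous fun z : X × (n → ℝ) => z.2 ⬝ᵥ (P z.1 *ᵥ z.2) :=
    continuous_snd.dotProduct ((hP.comp continuous_fst).matrix_mulVec continuous_snd)
  exact (isCompact_sphere 0 1).eventually_forall_of_forall_eventually fun v hv =>
    (hf.tendsto (x₀, v)).eventually_const_lt (h₀ v hv)

theorem isClosed_setOf_posSemidef {P : X → Matrix n n ℝ} (hP : Continuous P) :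
    IsClosed {x | (P x).PosSemidef} := by
  simp only [posSemidef_iff_dotProduct_mulVec, star_trivial, Set.ofPred_and, Set.ofPred_forall]
  exact (isClosed_eq hP.matrix_conjTranspose hP).inter <| isClosed_iInter fun v =>
    isClosed_le continuous_const (continuous_const.dotProduct (hP.matrix_mulVec continuous_const))

/-- A nonsingular positive semidefinite matrix is positive definite, so along a connected family
of nonsingular matrices positive definiteness is both an open and a closed condition. -/
theorem posDef_of_continuous_of_isUnit [DecidableEq n] [PreconnectedSpace X]
    {P : X → Matrix n n ℝ} (hP : Continuous P) (hherm : ∀ x, (P x).IsHermitian)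
    (hunit : ∀ x, IsUnit (P x)) {x₀ : X} (h₀ : (P x₀).PosDef) (x : X) : (P x).PosDef := by
  have hPSD : {x | (P x).PosDef} = {x | (P x).PosSemidef} :=
    Set.ext fun x => ⟨PosDef.posSemidef, fun h => h.posDef_iff_isUnit.mpr (hunit x)⟩
  have hclopen : IsClopen {x | (P x).PosDef} :=
    ⟨hPSD ▸ isClosed_setOf_posSemidef hP, isOpen_setOf_posDef hP hherm⟩
  exact Set.eq_univ_iff_forall.mp (hclopen.eq_univ ⟨x₀, h₀⟩) x

end Topology

end Matrix

open Matrix in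
/-- If every complex eigenvalue of the real matrix `M` has strictly positive real part,
then there exists a symmetric positive definite matrix `P` solving the Lyapunov equation
`P * M + Mᵀ * P = 1`. -/
theorem exists_posDef_lyapunov_solution
    (d : ℕ) (M : Matrix (Fin d) (Fin d) ℝ)
    (hM : ∀ μ ∈ spectrum ℂ (M.map (Complex.ofReal ·)), 0 < μ.re) :
    ∃ P : Matrix (Fin d) (Fin d) ℝ,
      P.IsSymm ∧ P.PosDef ∧ P * M + M.transpose * P = 1 := by
  let N (s : unitInterval) : Matrix (Fin d) (Fin d) ℝ := (1 - (s : ℝ)) • M + (s : ℝ) • 1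
  have hN (s : unitInterval) : (N s).IsPositiveStable :=
    IsPositiveStable.smul_add_smul_one hM s.2.1 s.2.2
  have hunit (s : unitInterval) := (hN s).isUnit_det_lyapunovMatrix
  let P (s : unitInterval) := lyapunovSolution (N s)
  have hsol (s : unitInterval) : P s * N s + (N s)ᵀ * P s = 1 :=
    lyapunovSolution_mul_add_transpose_mul (hunit s)
  have hsymm (s : unitInterval) : (P s).IsSymm :=
    (hN s).isSymm_of_mul_add_transpose_mul_eq isSymm_one (hsol s)
  have hcont : Continuous P := continuous_iff_continuousAt.mpr fun s =>
    (continuousAt_lyapunovSolution (hunit s)).comp (by fun_prop : Continuous N).continuousAt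
  have hP₁ : (P 1).PosDef := by
    have h := hsol 1
    simp only [N, Set.Icc.coe_one, sub_self, zero_smul, one_smul, zero_add, Matrix.mul_one,
      transpose_one, Matrix.one_mul] at h
    have : P 1 = (2⁻¹ : ℝ) • 1 := by rw [← h]; module
    exact this ▸ PosDef.one.smul (by norm_num)
  have hPD := posDef_of_continuous_of_isUnit hcont
    (fun s => isHermitian_iff_isSymm.mpr (hsymm s))
    (fun s => isUnit_of_mul_add_transpose_mul_eq_one (hsymm s) (hsol s)) hP₁
  exact ⟨P 0, hsymm 0, hPD 0, by simpa [N] using hsol 0⟩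
end

section
/- Let M ∈ ℝ^{d×d} (or ℂ^{d×d}) be a matrix all of whose complex eigenvalues have strictly positive real part. Then the matrix exponential exp(−t·M) tends to the zero matrix as t → ∞. -/
/-!
Over `ℂ`, `ℂᵈ` is the sum of the generalized eigenspaces of `A = M`. On the generalized
eigenspace of `μ`, `A = μ + N` with `N` nilpotent there, so `exp (-t A) w` is `e^{-t μ}` times a
polynomial in `t`, which tends to zero because `Re μ > 0`. Hence `exp (-t A) v → 0` for every `v`,
i.e. `exp (-t A) → 0`, and the real matrix `exp (-t M)` is the entrywise real part of it.
-/

open Filter Topology Finset Matrix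
open scoped Nat

theorem tendsto_pow_mul_cexp_neg_mul_atTop {μ : ℂ} (hμ : 0 < μ.re) (j : ℕ) :
    Tendsto (fun t : ℝ => (t : ℂ) ^ j * Complex.exp (-(t * μ))) atTop (𝓝 0) := by
  rw [tendsto_zero_iff_norm_tendsto_zero]
  refine (tendsto_rpow_mul_exp_neg_mul_atTop_nhds_zero j μ.re hμ).congr' ?_
  filter_upwards [eventually_ge_atTop 0] with t ht
  simp [Complex.norm_exp, abs_of_nonneg ht, mul_comm]

theorem Module.End.mem_spectrum_of_mem_maxGenEigenspace {R M : Type*} [CommRing R]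
    [AddCommGroup M] [Module R M] {f : Module.End R M} {μ : R} {v : M}
    (hv : v ∈ f.maxGenEigenspace μ) (hv0 : v ≠ 0) : μ ∈ spectrum R f := by
  obtain ⟨k, hk⟩ := (f.mem_maxGenEigenspace μ v).mp hv
  by_contra hμ
  have hunit : IsUnit ((f - μ • 1) ^ k) := by
    rw [← neg_sub, ← Algebra.algebraMap_eq_smul_one]
    exact (spectrum.notMem_iff.mp hμ).neg.pow k
  exact hv0 (((Module.End.isUnit_iff _).mp hunit).injective (by rw [hk, map_zero]))

namespace Matrix

variable {n : Type*} [Fintype n] [DecidableEq n]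

theorem tendsto_of_tendsto_mulVec {α m R : Type*} [NonAssocSemiring R] [TopologicalSpace R]
    {l : Filter α} {f : α → Matrix m n R} {B : Matrix m n R}
    (h : ∀ v, Tendsto (fun a => f a *ᵥ v) l (𝓝 (B *ᵥ v))) : Tendsto f l (𝓝 B) := by
  refine tendsto_pi_nhds.mpr fun i => tendsto_pi_nhds.mpr fun j => ?_
  simpa [mulVec_single_one] using tendsto_pi_nhds.mp (h (Pi.single j 1)) i

section RCLike

variable {𝕂 : Type*} [RCLike 𝕂]

theorem exp_algebraMap (z : 𝕂) :
    NormedSpace.exp (algebraMap 𝕂 (Matrix n n 𝕂) z) =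
      algebraMap 𝕂 (Matrix n n 𝕂) (NormedSpace.exp z) := by
  -- `exp` only sees the topology, so any Banach-algebra norm on matrices unlocks the normed API.
  have h := open scoped Matrix.Norms.Operator in
    NormedSpace.algebraMap_exp_comm (𝔸 := Matrix n n 𝕂) z
  exact h.symm

theorem exp_mulVec_eq_sum_of_pow_mulVec_eq_zero {N : Matrix n n 𝕂} {w : n → 𝕂} {k : ℕ}
    (h : N ^ k *ᵥ w = 0) :
    NormedSpace.exp N *ᵥ w = ∑ j ∈ range k, (j !⁻¹ : 𝕂) • (N ^ j *ᵥ w) := by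
  have hexp : HasSum (fun j => (j !⁻¹ : 𝕂) • N ^ j) (NormedSpace.exp N) :=
    open scoped Matrix.Norms.Operator in NormedSpace.exp_series_hasSum_exp' N
  have hvanish : ∀ j ∉ range k, (j !⁻¹ : 𝕂) • (N ^ j *ᵥ w) = 0 := fun j hj => by
    obtain ⟨l, rfl⟩ := Nat.exists_eq_add_of_le (not_lt.mp (mem_range.not.mp hj))
    rw [add_comm, pow_add, ← mulVec_mulVec, h, mulVec_zero, smul_zero]
  refine (hexp.map (AddMonoidHom.mk' (· *ᵥ w) fun P Q => add_mulVec P Q w)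
    (continuous_id.matrix_mulVec continuous_const)).unique ?_
  simpa only [AddMonoidHom.mk'_apply, Function.comp_def, smul_mulVec] using
    hasSum_sum_of_ne_finset_zero hvanish

end RCLike

theorem exp_smul_mulVec_eq_sum_of_pow_sub_mulVec_eq_zero {A : Matrix n n ℂ} {μ : ℂ}
    {w : n → ℂ} {k : ℕ} (h : (A - μ • 1) ^ k *ᵥ w = 0) (c : ℂ) :
    NormedSpace.exp (c • A) *ᵥ w =
      ∑ j ∈ range k, (c ^ j * Complex.exp (c * μ) / j !) • ((A - μ • 1) ^ j *ᵥ w) := by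
  set N := A - μ • 1
  have hsplit : c • A = algebraMap ℂ _ (c * μ) + c • N := by
    rw [Algebra.algebraMap_eq_smul_one, smul_sub, mul_smul]
    abel
  have hN : (c • N) ^ k *ᵥ w = 0 := by rw [smul_pow, smul_mulVec, h, smul_zero]
  rw [hsplit, exp_add_of_commute _ _ (Algebra.commute_algebraMap_left _ _), exp_algebraMap,
    ← Complex.exp_eq_exp_ℂ, ← mulVec_mulVec, exp_mulVec_eq_sum_of_pow_mulVec_eq_zero hN,
    Algebra.algebraMap_eq_smul_one, smul_mulVec, one_mulVec, smul_sum]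
  refine sum_congr rfl fun j _ => ?_
  rw [smul_pow, smul_mulVec, smul_smul, smul_smul]
  congr 1
  ring

theorem tendsto_exp_neg_smul_mulVec_of_pow_sub_mulVec_eq_zero {A : Matrix n n ℂ} {μ : ℂ}
    (hμ : 0 < μ.re) {w : n → ℂ} {k : ℕ} (h : (A - μ • 1) ^ k *ᵥ w = 0) :
    Tendsto (fun t : ℝ => NormedSpace.exp (-(t : ℂ) • A) *ᵥ w) atTop (𝓝 0) := by
  simp_rw [exp_smul_mulVec_eq_sum_of_pow_sub_mulVec_eq_zero h]
  rw [← sum_const_zero (s := range k)]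
  refine tendsto_finsetSum _ fun j _ => ?_
  have hterm := ((tendsto_pow_mul_cexp_neg_mul_atTop hμ j).const_mul
    ((-1) ^ j / j ! : ℂ)).smul_const ((A - μ • 1) ^ j *ᵥ w)
  rw [mul_zero, zero_smul] at hterm
  refine hterm.congr fun t => ?_
  rw [neg_pow, neg_mul]
  congr 1
  ring

theorem tendsto_exp_neg_smul {A : Matrix n n ℂ} (hA : ∀ μ ∈ spectrum ℂ A, 0 < μ.re) :
    Tendsto (fun t : ℝ => NormedSpace.exp (-(t : ℂ) • A)) atTop (𝓝 0) := by
  refine tendsto_of_tendsto_mulVec fun v => ?_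
  have hv : v ∈ ⨆ μ, Module.End.maxGenEigenspace (toLin' A) μ := by
    rw [Module.End.iSup_maxGenEigenspace_eq_top]
    trivial
  refine Submodule.iSup_induction (x := v) _ hv (fun μ w hw => ?_) (by simp)
    fun x y hx hy => by simpa [mulVec_add] using hx.add hy
  obtain rfl | hw0 := eq_or_ne w 0
  · simp
  have hμ := Module.End.mem_spectrum_of_mem_maxGenEigenspace hw hw0
  rw [spectrum_toLin'] at hμ
  obtain ⟨k, hk⟩ := (Module.End.mem_maxGenEigenspace _ μ w).mp hw
  have hpow : (toLin' A - μ • 1) ^ k = toLinAlgEquiv' ((A - μ • 1) ^ k) := by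
    rw [map_pow, map_sub, map_smul, map_one]
    rfl
  rw [hpow, toLinAlgEquiv'_apply] at hk
  simpa using tendsto_exp_neg_smul_mulVec_of_pow_sub_mulVec_eq_zero (hA μ hμ) hk

theorem map_ofReal_exp (M : Matrix n n ℝ) :
    (NormedSpace.exp M).map ((↑) : ℝ → ℂ) = NormedSpace.exp (M.map ((↑) : ℝ → ℂ)) := by
  have h := open scoped Matrix.Norms.Operator in
    NormedSpace.map_exp (Complex.ofRealHom.mapMatrix : Matrix n n ℝ →+* Matrix n n ℂ)
      (continuous_id.matrix_map Complex.continuous_ofReal) M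
  exact h

end Matrix

/-- If every complex eigenvalue of the real matrix `M` has strictly positive real part,
then the matrix exponential `exp (-t • M)` tends to the zero matrix as `t → ∞`. -/
theorem matrix_exp_neg_smul_tendsto_zero
    (d : ℕ) (M : Matrix (Fin d) (Fin d) ℝ)
    (hM : ∀ μ ∈ spectrum ℂ (M.map (Complex.ofReal ·)), 0 < μ.re) :
    Tendsto (fun t : ℝ => NormedSpace.exp ((-t) • M)) atTop (nhds 0) := by
  have hmap (t : ℝ) : ((-t) • M).map ((↑) : ℝ → ℂ) = -(t : ℂ) • M.map (Complex.ofReal ·) := by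
    ext
    simp
  convert ((continuous_id.matrix_map Complex.continuous_re).tendsto 0).comp
    (Matrix.tendsto_exp_neg_smul hM) using 2 with t
  · rw [Function.comp_apply, ← hmap, ← Matrix.map_ofReal_exp]
    ext
    simp
  · simp
end

section
/- Let n > m ≥ 1 and consider a weighted directed graph on n vertices with nonnegative adjacency matrix A = (a_ij) and Laplacian L partitioned as L = [[L_FF, L_FR],[0, 0]], with the last m vertices leaders and the first n−m followers. Assume every follower is reachable from some leader (so L_FF is invertible). Then every entry of the matrix W = −L_FF⁻¹·L_FR is nonnegative and every row of W sums to 1; consequently, for any leader positions x₁, …, x_m ∈ ℝ^N, each component (W·x_R)_i (i.e., Σ_j W_ij x_j) lies in the convex hull of {x₁, …, x_m}. -/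
/-!
The follower block `L_FF` of the Laplacian is a Z-matrix whose `i`-th row sum is the total weight
follower `i` receives from leaders. If `L_FF u ≥ 0` and `u` had a negative minimum, then at every
vertex attaining it the minimum would spread to all in-neighbours and no leader could feed in;
following a path from a leader backwards yields a contradiction. Hence `L_FF` is inverse-positive,
so invertible, and `W = -L_FF⁻¹ L_FR ≥ 0` because `-L_FR ≥ 0`. Zero row sums of `L` give
`L_FF (W 1) = -L_FR 1 = L_FF 1`, i.e. `W 1 = 1`, so each `∑ j, W i j • x j` is a convex
combination.
-/

open Finset Matrix

namespace Matrix

variable {ι : Type*} [Fintype ι] {M : Matrix ι ι ℝ}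

lemma mulVec_apply_eq_sum_row_mul_add (u : ι → ℝ) (c : ℝ) (i : ι) :
    (M *ᵥ u) i = (∑ k, M i k) * c + ∑ k, M i k * (u k - c) := by
  simp only [mulVec, dotProduct, mul_sub, sum_sub_distrib, sum_mul]
  ring

lemma sum_row_eq_zero_and_eq_min_of_mulVec_nonneg
    (hoff : ∀ i k, i ≠ k → M i k ≤ 0) (hrow : ∀ i, 0 ≤ ∑ k, M i k)
    {u : ι → ℝ} {c : ℝ} (hc : c < 0) (hmin : ∀ k, c ≤ u k) {i : ι} (hi : u i = c)
    (hMu : 0 ≤ (M *ᵥ u) i) :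
    ∑ k, M i k = 0 ∧ ∀ k, M i k < 0 → u k = c := by
  have hterm : ∀ k, M i k * (u k - c) ≤ 0 := by
    intro k
    rcases eq_or_ne i k with rfl | hik
    · simp [hi]
    · exact mul_nonpos_of_nonpos_of_nonneg (hoff i k hik) (sub_nonneg.2 (hmin k))
  have hsum : ∑ k, M i k * (u k - c) ≤ 0 := sum_nonpos fun k _ => hterm k
  have hrc : (∑ k, M i k) * c ≤ 0 := mul_nonpos_of_nonneg_of_nonpos (hrow i) hc.le
  rw [mulVec_apply_eq_sum_row_mul_add u c i] at hMu
  refine ⟨(mul_eq_zero.1 (by linarith : (∑ k, M i k) * c = 0)).resolve_right hc.ne, ?_⟩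
  intro k hk
  have hsum0 := (sum_eq_zero_iff_of_nonpos fun k _ => hterm k).1 (by linarith) k (mem_univ k)
  linarith [(mul_eq_zero.1 hsum0).resolve_left hk.ne]

/-- Minimum principle for a weakly chained diagonally dominant Z-matrix. -/
theorem nonneg_of_nonneg_mulVec
    (hoff : ∀ i k, i ≠ k → M i k ≤ 0) (hrow : ∀ i, 0 ≤ ∑ k, M i k)
    (hchain : ∀ i, ∃ k, Relation.ReflTransGen (fun a b => M a b < 0) i k ∧ 0 < ∑ l, M k l)
    {u : ι → ℝ} (hu : 0 ≤ M *ᵥ u) : 0 ≤ u := by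
  by_contra hneg
  obtain ⟨i₀, hi₀⟩ : ∃ i, u i < 0 := by simpa [Pi.le_def] using hneg
  obtain ⟨i, -, hmin⟩ := exists_min_image univ u ⟨i₀, mem_univ _⟩
  have hc : u i < 0 := (hmin i₀ (mem_univ _)).trans_lt hi₀
  have hspread (a : ι) (ha : u a = u i) :=
    sum_row_eq_zero_and_eq_min_of_mulVec_nonneg hoff hrow hc (fun k => hmin k (mem_univ k)) ha
      (hu a)
  obtain ⟨k, hpath, hk⟩ := hchain i
  have hki : u k = u i := by
    clear hk
    induction hpath with
    | refl => rfl
    | tail _ hbc ih => exact (hspread _ ih).2 _ hbc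
  exact hk.ne' (hspread k hki).1

theorem isUnit_det_of_nonneg_of_nonneg_mulVec [DecidableEq ι]
    (h : ∀ u : ι → ℝ, 0 ≤ M *ᵥ u → 0 ≤ u) : IsUnit M.det := by
  rw [← isUnit_iff_isUnit_det, ← mulVec_injective_iff_isUnit]
  intro u v huv
  have huv' : M *ᵥ (u - v) = 0 := by rw [mulVec_sub, huv, sub_self]
  have hvu' : M *ᵥ (v - u) = 0 := by rw [mulVec_sub, huv, sub_self]
  exact le_antisymm (sub_nonneg.1 (h _ hvu'.ge)) (sub_nonneg.1 (h _ huv'.ge))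

end Matrix

def weightedLaplacian {α : Type*} [Fintype α] [DecidableEq α] (A : Matrix α α ℝ) :
    Matrix α α ℝ :=
  Matrix.of fun i j => if i = j then ∑ k ∈ univ.erase i, A i k else -A i j

section Laplacian

variable {α : Type*} [Fintype α] [DecidableEq α] {A : Matrix α α ℝ}

lemma weightedLaplacian_apply_of_ne {i j : α} (h : i ≠ j) : weightedLaplacian A i j = -A i j :=
  if_neg h

lemma sum_weightedLaplacian_row (i : α) : ∑ j, weightedLaplacian A i j = 0 := by
  rw [← add_sum_erase _ _ (mem_univ i),
    sum_congr rfl fun j hj => weightedLaplacian_apply_of_ne (ne_of_mem_erase hj).symm,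
    sum_neg_distrib]
  simp [weightedLaplacian]

lemma eq_weightedLaplacian {L : Matrix α α ℝ}
    (hLdiag : ∀ i, L i i = ∑ j ∈ univ.filter (fun j => j ≠ i), A i j)
    (hLoff : ∀ i j, i ≠ j → L i j = -A i j) : L = weightedLaplacian A := by
  ext i j
  rcases eq_or_ne i j with rfl | h
  · simp [weightedLaplacian, hLdiag, filter_ne']
  · rw [hLoff i j h, weightedLaplacian_apply_of_ne h]

end Laplacian

section Followers

variable {ι κ : Type*} [Fintype ι] [Fintype κ] [DecidableEq ι] [DecidableEq κ]
  {A : Matrix (ι ⊕ κ) (ι ⊕ κ) ℝ}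

variable (A) in
def EveryFollowerReachable : Prop :=
  ∀ i : ι, ∃ j : κ, Relation.ReflTransGen (fun u v => 0 < A v u) (.inr j) (.inl i)

lemma toBlocks₁₁_weightedLaplacian_apply_of_ne {i k : ι} (h : i ≠ k) :
    (weightedLaplacian A).toBlocks₁₁ i k = -A (.inl i) (.inl k) :=
  weightedLaplacian_apply_of_ne (Sum.inl_injective.ne h)

lemma toBlocks₁₂_weightedLaplacian_apply (i : ι) (j : κ) :
    (weightedLaplacian A).toBlocks₁₂ i j = -A (.inl i) (.inr j) :=
  weightedLaplacian_apply_of_ne (α := ι ⊕ κ) Sum.inl_ne_inr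

lemma sum_toBlocks₁₁_weightedLaplacian_row (i : ι) :
    ∑ k, (weightedLaplacian A).toBlocks₁₁ i k = ∑ j, A (.inl i) (.inr j) := by
  have h := sum_weightedLaplacian_row (A := A) (.inl i)
  rw [Fintype.sum_sum_type] at h
  simp only [toBlocks₁₁, of_apply, weightedLaplacian_apply_of_ne Sum.inl_ne_inr,
    sum_neg_distrib] at h ⊢
  linarith

/-- The witness `k` is the first follower on the path. -/
lemma exists_chain_toBlocks₁₁_weightedLaplacian (hA : ∀ u v, 0 ≤ A u v) {i : ι} {j : κ}
    (hpath : Relation.ReflTransGen (fun u v => 0 < A v u) (.inr j) (.inl i)) :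
    ∃ k, Relation.ReflTransGen (fun a b => (weightedLaplacian A).toBlocks₁₁ a b < 0) i k ∧
      0 < ∑ l, (weightedLaplacian A).toBlocks₁₁ k l := by
  generalize hv : (Sum.inl i : ι ⊕ κ) = v at hpath
  induction hpath generalizing i with
  | refl => cases hv
  | @tail b c _ hbc ih =>
    subst hv
    rcases b with i' | j'
    · obtain ⟨k, hk, hpos⟩ := ih rfl
      by_cases h : i = i'
      · exact h ▸ ⟨k, hk, hpos⟩
      · refine ⟨k, .head ?_ hk, hpos⟩
        rw [toBlocks₁₁_weightedLaplacian_apply_of_ne h]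
        exact neg_neg_of_pos hbc
    · refine ⟨i, .refl, ?_⟩
      rw [sum_toBlocks₁₁_weightedLaplacian_row]
      exact hbc.trans_le (single_le_sum (fun j _ => hA _ _) (mem_univ j'))

lemma nonneg_of_nonneg_toBlocks₁₁_weightedLaplacian_mulVec (hA : ∀ u v, 0 ≤ A u v)
    (hreach : EveryFollowerReachable A)
    {u : ι → ℝ} (hu : 0 ≤ (weightedLaplacian A).toBlocks₁₁ *ᵥ u) : 0 ≤ u := by
  refine nonneg_of_nonneg_mulVec (fun i k h => ?_) (fun i => ?_) (fun i => ?_) hu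
  · rw [toBlocks₁₁_weightedLaplacian_apply_of_ne h]
    exact neg_nonpos.2 (hA _ _)
  · rw [sum_toBlocks₁₁_weightedLaplacian_row]
    exact sum_nonneg fun j _ => hA _ _
  · obtain ⟨j, hpath⟩ := hreach i
    exact exists_chain_toBlocks₁₁_weightedLaplacian hA hpath

theorem isUnit_det_toBlocks₁₁_weightedLaplacian (hA : ∀ u v, 0 ≤ A u v)
    (hreach : EveryFollowerReachable A) :
    IsUnit (weightedLaplacian A).toBlocks₁₁.det :=
  isUnit_det_of_nonneg_of_nonneg_mulVec fun _ =>
    nonneg_of_nonneg_toBlocks₁₁_weightedLaplacian_mulVec hA hreach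

variable (A) in
/-- Row `i` expresses the equilibrium of follower `i` as a combination of the leaders. -/
noncomputable def harmonicWeights : Matrix ι κ ℝ :=
  -((weightedLaplacian A).toBlocks₁₁⁻¹ * (weightedLaplacian A).toBlocks₁₂)

lemma toBlocks₁₁_mul_harmonicWeights (hA : ∀ u v, 0 ≤ A u v)
    (hreach : EveryFollowerReachable A) :
    (weightedLaplacian A).toBlocks₁₁ * harmonicWeights A =
      -(weightedLaplacian A).toBlocks₁₂ := by
  rw [harmonicWeights, Matrix.mul_neg,
    mul_nonsing_inv_cancel_left _ _ (isUnit_det_toBlocks₁₁_weightedLaplacian hA hreach)]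

theorem harmonicWeights_nonneg (hA : ∀ u v, 0 ≤ A u v)
    (hreach : EveryFollowerReachable A)
    (i : ι) (j : κ) : 0 ≤ harmonicWeights A i j := by
  have hcol : 0 ≤ harmonicWeights A *ᵥ Pi.single j 1 := by
    refine nonneg_of_nonneg_toBlocks₁₁_weightedLaplacian_mulVec hA hreach ?_
    rw [mulVec_mulVec, toBlocks₁₁_mul_harmonicWeights hA hreach, mulVec_single_one]
    intro i
    simp [toBlocks₁₂_weightedLaplacian_apply, hA]
  simpa [mulVec_single_one] using hcol i

theorem sum_harmonicWeights_row (hA : ∀ u v, 0 ≤ A u v)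
    (hreach : EveryFollowerReachable A)
    (i : ι) : ∑ j, harmonicWeights A i j = 1 := by
  have hone : (weightedLaplacian A).toBlocks₁₁ *ᵥ (harmonicWeights A *ᵥ 1) =
      (weightedLaplacian A).toBlocks₁₁ *ᵥ 1 := by
    rw [mulVec_mulVec, toBlocks₁₁_mul_harmonicWeights hA hreach]
    ext i
    simp [mulVec, dotProduct, sum_toBlocks₁₁_weightedLaplacian_row,
      toBlocks₁₂_weightedLaplacian_apply]
  have hinj := mulVec_injective_iff_isUnit.2
    ((isUnit_iff_isUnit_det _).2 (isUnit_det_toBlocks₁₁_weightedLaplacian hA hreach))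
  simpa [mulVec, dotProduct] using congrFun (hinj hone) i

end Followers

theorem containment_final_positions_in_convexHull_general
    (p m : ℕ)
    (A : Matrix (Fin p ⊕ Fin m) (Fin p ⊕ Fin m) ℝ)
    (hA : ∀ i j, 0 ≤ A i j)
    (L : Matrix (Fin p ⊕ Fin m) (Fin p ⊕ Fin m) ℝ)
    (hLdiag : ∀ i, L i i = ∑ j ∈ Finset.univ.filter (fun j => j ≠ i), A i j)
    (hLoff : ∀ i j, i ≠ j → L i j = -A i j)
    (LFF : Matrix (Fin p) (Fin p) ℝ)
    (hLFF : ∀ i j, LFF i j = L (Sum.inl i) (Sum.inl j))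
    (LFR : Matrix (Fin p) (Fin m) ℝ)
    (hLFR : ∀ i j, LFR i j = L (Sum.inl i) (Sum.inr j))
    (hreach : ∀ i : Fin p, ∃ j : Fin m,
        Relation.ReflTransGen (fun u v => 0 < A v u) (Sum.inr j) (Sum.inl i))
    (W : Matrix (Fin p) (Fin m) ℝ) (hW : W = -(LFF⁻¹ * LFR)) :
    (∀ i j, 0 ≤ W i j) ∧ (∀ i, ∑ j, W i j = 1) ∧
      ∀ (N : ℕ) (x : Fin m → (Fin N → ℝ)) (i : Fin p),
        (∑ j, W i j • x j) ∈ convexHull ℝ (Set.range x) := by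
  obtain rfl : L = weightedLaplacian A := eq_weightedLaplacian hLdiag hLoff
  obtain rfl : LFF = (weightedLaplacian A).toBlocks₁₁ := Matrix.ext hLFF
  obtain rfl : LFR = (weightedLaplacian A).toBlocks₁₂ := Matrix.ext hLFR
  obtain rfl : W = harmonicWeights A := hW
  have hW₀ := harmonicWeights_nonneg hA hreach
  have hW₁ := sum_harmonicWeights_row hA hreach
  refine ⟨hW₀, hW₁, fun N x i => ?_⟩
  exact (convex_convexHull ℝ _).sum_mem (fun j _ => hW₀ i j) (hW₁ i)
    fun j _ => subset_convexHull ℝ _ (Set.mem_range_self j)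

/-- Under the reachability assumption, `W = -LFF⁻¹ * LFR` has nonnegative entries and row
sums equal to `1`; consequently, for any leader positions `x : Fin m → ℝ^N`, each
component `∑ j, W i j • x j` lies in the convex hull of the leaders' positions. -/
theorem containment_final_positions_in_convexHull
    (p m : ℕ) (hp : 1 ≤ p) (hm : 1 ≤ m)
    (A : Matrix (Fin p ⊕ Fin m) (Fin p ⊕ Fin m) ℝ)
    (hA : ∀ i j, 0 ≤ A i j)
    (hleader : ∀ (j : Fin m) (v : Fin p ⊕ Fin m), A (Sum.inr j) v = 0)
    (hfollower : ∀ i : Fin p, ∃ v, 0 < A (Sum.inl i) v)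
    (L : Matrix (Fin p ⊕ Fin m) (Fin p ⊕ Fin m) ℝ)
    (hLdiag : ∀ i, L i i = ∑ j ∈ Finset.univ.filter (fun j => j ≠ i), A i j)
    (hLoff : ∀ i j, i ≠ j → L i j = -A i j)
    (LFF : Matrix (Fin p) (Fin p) ℝ)
    (hLFF : ∀ i j, LFF i j = L (Sum.inl i) (Sum.inl j))
    (LFR : Matrix (Fin p) (Fin m) ℝ)
    (hLFR : ∀ i j, LFR i j = L (Sum.inl i) (Sum.inr j))
    (hreach : ∀ i : Fin p, ∃ j : Fin m,
        Relation.ReflTransGen (fun u v => 0 < A v u) (Sum.inr j) (Sum.inl i))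
    (W : Matrix (Fin p) (Fin m) ℝ) (hW : W = -(LFF⁻¹ * LFR)) :
    (∀ i j, 0 ≤ W i j) ∧ (∀ i, ∑ j, W i j = 1) ∧
      ∀ (N : ℕ) (x : Fin m → (Fin N → ℝ)) (i : Fin p),
        (∑ j, W i j • x j) ∈ convexHull ℝ (Set.range x) :=
  containment_final_positions_in_convexHull_general p m A hA L hLdiag hLoff LFF hLFF LFR hLFR hreach
    W hW
end

section
/- Let a : [0, ∞) → [0, ∞) be continuous with lim_{t→∞} a(t) = 0 and ∫₀^∞ a(s) ds = ∞, and let α > 0. Then lim_{t→∞} ∫₀ᵗ e^{−α·∫ₛᵗ a(u) du}·a(s)² ds = 0. -/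
/-!
Write `w(s, t) = exp (-α ∫ₛᵗ a)`. Since `∂ₛ w(s, t) = α a(s) w(s, t)` and `w(t, t) = 1`, the
kernel `α a(s) w(s, t) ds` has mass `1 - w(T, t) ≤ 1` on `[T, t]`, so if `f ≤ δ` beyond `T` then
`∫_T^t w(s, t) a(s) f(s) ds ≤ δ / α`. On `[0, T]` the weight is at most `w(T, t)`, which tends to
`0` because `∫ a = ∞`. The theorem is the case `f = a`.
-/

open Filter MeasureTheory Set Real intervalIntegral Topology

section DiscountedIntegral

variable {a f : ℝ → ℝ} {α δ r T t : ℝ}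

theorem continuousOn_exp_neg_mul_integral (hrt : r ≤ t) (ha : ContinuousOn a (Icc r t)) :
    ContinuousOn (fun s => exp (-α * ∫ u in s..t, a u)) (Icc r t) := by
  have hprim := continuousOn_primitive_interval_left (μ := volume)
    (ha.integrableOn_Icc.mono_set (uIcc_of_le hrt).le)
  rw [uIcc_of_le hrt] at hprim
  exact continuous_exp.comp_continuousOn (continuousOn_const.mul hprim)

theorem integral_exp_neg_mul_integral_mul (hrt : r ≤ t) (ha : ContinuousOn a (Icc r t)) :
    ∫ s in r..t, exp (-α * ∫ u in s..t, a u) * (α * a s) = 1 - exp (-α * ∫ u in r..t, a u) := by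
  have hderiv : ∀ s ∈ Ioo r t,
      HasDerivAt (fun s => exp (-α * ∫ u in s..t, a u))
        (exp (-α * ∫ u in s..t, a u) * (α * a s)) s := by
    intro s hs
    have hint : IntervalIntegrable a volume s t :=
      (ha.mono (Icc_subset_Icc hs.1.le le_rfl)).intervalIntegrable_of_Icc hs.2.le
    have hleft := integral_hasDerivAt_left hint
      (ha.mono Ioo_subset_Icc_self |>.stronglyMeasurableAtFilter isOpen_Ioo s hs)
      (ha.continuousAt (Icc_mem_nhds hs.1 hs.2))
    simpa using (hleft.const_mul (-α)).exp
  rw [integral_eq_sub_of_hasDerivAt_of_le hrt (continuousOn_exp_neg_mul_integral hrt ha) hderiv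
    (((continuousOn_exp_neg_mul_integral hrt ha).mul
      (continuousOn_const.mul ha)).intervalIntegrable_of_Icc hrt)]
  simp

theorem integral_exp_neg_mul_integral_mul_le (hrT : r ≤ T) (hTt : T ≤ t)
    (ha : ContinuousOn a (Icc r t)) (ha0 : ∀ s ∈ Icc r t, 0 ≤ a s) (hα : 0 ≤ α)
    (hf : ContinuousOn f (Icc r T)) (hf0 : ∀ s ∈ Icc r T, 0 ≤ f s) :
    ∫ s in r..T, exp (-α * ∫ u in s..t, a u) * f s ≤
      exp (-α * ∫ u in T..t, a u) * ∫ s in r..T, f s := by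
  rw [← intervalIntegral.integral_const_mul]
  refine integral_mono_on hrT
    (((continuousOn_exp_neg_mul_integral (hrT.trans hTt) ha).mono
      (Icc_subset_Icc le_rfl hTt)).mul hf |>.intervalIntegrable_of_Icc hrT)
    ((hf.intervalIntegrable_of_Icc hrT).const_mul _) fun s hs => ?_
  have hshrink : ∫ u in T..t, a u ≤ ∫ u in s..t, a u :=
    integral_mono_interval hs.2 hTt le_rfl
      ((ae_restrict_mem measurableSet_Ioc).mono fun u hu => ha0 u ⟨hs.1.trans hu.1.le, hu.2⟩)
      ((ha.mono (Icc_subset_Icc hs.1 le_rfl)).intervalIntegrable_of_Icc (hs.2.trans hTt))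
  exact mul_le_mul_of_nonneg_right (exp_le_exp.2 (by nlinarith)) (hf0 s hs)

theorem integral_exp_neg_mul_integral_mul_mul_le_div (hTt : T ≤ t)
    (ha : ContinuousOn a (Icc T t)) (ha0 : ∀ s ∈ Icc T t, 0 ≤ a s) (hα : 0 < α) (hδ : 0 ≤ δ)
    (hf : ContinuousOn f (Icc T t)) (hfδ : ∀ s ∈ Icc T t, f s ≤ δ) :
    ∫ s in T..t, exp (-α * ∫ u in s..t, a u) * (a s * f s) ≤ δ / α := by
  have hw := continuousOn_exp_neg_mul_integral (α := α) hTt ha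
  calc ∫ s in T..t, exp (-α * ∫ u in s..t, a u) * (a s * f s)
      ≤ ∫ s in T..t, δ / α * (exp (-α * ∫ u in s..t, a u) * (α * a s)) := by
        refine integral_mono_on hTt ((hw.mul (ha.mul hf)).intervalIntegrable_of_Icc hTt)
          (((hw.mul (continuousOn_const.mul ha)).intervalIntegrable_of_Icc hTt).const_mul _)
          fun s hs => ?_
        have h : exp (-α * ∫ u in s..t, a u) * (a s * f s) ≤
            exp (-α * ∫ u in s..t, a u) * (a s * δ) := by
          gcongr
          · exact ha0 s hs
          · exact hfδ s hs
        convert h using 1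
        field_simp
    _ = δ / α * (1 - exp (-α * ∫ u in T..t, a u)) := by
        rw [intervalIntegral.integral_const_mul, integral_exp_neg_mul_integral_mul hTt ha]
    _ ≤ δ / α := by
        have := exp_pos (-α * ∫ u in T..t, a u)
        have : 0 ≤ δ / α := by positivity
        nlinarith

theorem tendsto_integral_atTop_of_le (ha : ContinuousOn a (Ici r)) (hrT : r ≤ T)
    (hA : Tendsto (fun t => ∫ s in r..t, a s) atTop atTop) :
    Tendsto (fun t => ∫ s in T..t, a s) atTop atTop := by
  have hint : ∀ t, r ≤ t → IntervalIntegrable a volume r t := fun t ht =>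
    (ha.mono Icc_subset_Ici_self).intervalIntegrable_of_Icc ht
  refine (tendsto_atTop_add_const_right _ (-∫ s in r..T, a s) hA).congr' ?_
  filter_upwards [eventually_ge_atTop r] with t ht
  rw [← sub_eq_add_neg, integral_interval_sub_left (hint t ht) (hint T hrT)]

theorem tendsto_integral_exp_neg_mul_integral_mul_mul_nhds_zero (ha : ContinuousOn a (Ici 0))
    (ha0 : ∀ s ∈ Ici (0 : ℝ), 0 ≤ a s) (hA : Tendsto (fun t => ∫ s in (0 : ℝ)..t, a s) atTop atTop)
    (hf : ContinuousOn f (Ici 0)) (hf0 : ∀ s ∈ Ici (0 : ℝ), 0 ≤ f s)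
    (hf_lim : Tendsto f atTop (𝓝 0)) (hα : 0 < α) :
    Tendsto (fun t => ∫ s in (0 : ℝ)..t, exp (-α * ∫ u in s..t, a u) * (a s * f s))
      atTop (𝓝 0) := by
  refine tendsto_order.2 ⟨fun ε hε => ?_, fun ε hε => ?_⟩
  · filter_upwards [eventually_ge_atTop 0] with t ht
    exact hε.trans_le <| integral_nonneg ht fun s hs =>
      mul_nonneg (exp_pos _).le (mul_nonneg (ha0 s hs.1) (hf0 s hs.1))
  obtain ⟨T, hT⟩ := ((eventually_ge_atTop 0).and
    (hf_lim.eventually (ge_mem_nhds (half_pos (mul_pos hα hε))))).exists_forall_of_atTop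
  have hT0 : 0 ≤ T := (hT T le_rfl).1
  have hhead : Tendsto (fun t => exp (-α * ∫ u in T..t, a u) * ∫ s in (0 : ℝ)..T, a s * f s)
      atTop (𝓝 0) := by
    simpa using (tendsto_exp_atBot.comp ((tendsto_integral_atTop_of_le ha hT0 hA)
      |>.const_mul_atTop_of_neg (neg_lt_zero.2 hα))).mul_const (∫ s in (0 : ℝ)..T, a s * f s)
  filter_upwards [eventually_ge_atTop T, hhead.eventually_lt_const (half_pos hε)] with t hTt ht
  have hat := ha.mono (Icc_subset_Ici_self : Icc 0 t ⊆ Ici 0)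
  have hft := hf.mono (Icc_subset_Ici_self : Icc 0 t ⊆ Ici 0)
  have hcont := (continuousOn_exp_neg_mul_integral (α := α) (hT0.trans hTt) hat).mul (hat.mul hft)
  calc ∫ s in (0 : ℝ)..t, exp (-α * ∫ u in s..t, a u) * (a s * f s)
      = (∫ s in (0 : ℝ)..T, exp (-α * ∫ u in s..t, a u) * (a s * f s)) +
          ∫ s in T..t, exp (-α * ∫ u in s..t, a u) * (a s * f s) :=
        (integral_add_adjacent_intervals
          ((hcont.mono (Icc_subset_Icc le_rfl hTt)).intervalIntegrable_of_Icc hT0)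
          ((hcont.mono (Icc_subset_Icc hT0 le_rfl)).intervalIntegrable_of_Icc hTt)).symm
    _ ≤ exp (-α * ∫ u in T..t, a u) * (∫ s in (0 : ℝ)..T, a s * f s) + α * ε / 2 / α := by
        gcongr
        · exact integral_exp_neg_mul_integral_mul_le hT0 hTt hat (fun s hs => ha0 s hs.1) hα.le
            ((hat.mul hft).mono (Icc_subset_Icc le_rfl hTt))
            fun s hs => mul_nonneg (ha0 s hs.1) (hf0 s hs.1)
        · exact integral_exp_neg_mul_integral_mul_mul_le_div hTt
            (hat.mono (Icc_subset_Icc hT0 le_rfl)) (fun s hs => ha0 s (hT0.trans hs.1)) hα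
            (by positivity) (hft.mono (Icc_subset_Icc hT0 le_rfl)) fun s hs => (hT s hs.1).2
    _ < ε := by
        rw [mul_div_assoc, mul_div_cancel_left₀ _ hα.ne']
        linarith

end DiscountedIntegral

/-- If the gain function `a : [0,∞) → [0,∞)` is continuous with `a(t) → 0` and
`∫₀^∞ a = ∞`, then for every `α > 0` the accumulated noise contribution
`∫₀ᵗ e^{-α ∫ₛᵗ a} a(s)² ds` tends to `0` as `t → ∞`. -/
theorem accumulated_noise_tendsto_zero
    (a : ℝ → ℝ)
    (ha_cont : ContinuousOn a (Set.Ici 0))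
    (ha_nonneg : ∀ t ∈ Set.Ici (0 : ℝ), 0 ≤ a t)
    (ha_lim : Tendsto a atTop (nhds 0))
    (ha_int : Tendsto (fun t : ℝ => ∫ s in (0:ℝ)..t, a s) atTop atTop)
    (α : ℝ) (hα : 0 < α) :
    Tendsto (fun t : ℝ =>
        ∫ s in (0:ℝ)..t, Real.exp (-α * ∫ u in s..t, a u) * (a s) ^ 2)
      atTop (nhds 0) := by
  simpa only [← sq] using tendsto_integral_exp_neg_mul_integral_mul_mul_nhds_zero ha_cont
    ha_nonneg ha_int ha_cont ha_nonneg ha_lim hα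
end
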